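/- Let x > 0, a ∈ ℝ with 0 ≤ a < K for a positive integer K, ω = e^{-πi/4}, and H_K := ∫_0^∞ e^{-2πKωτ} · 2e^{-πxτ²} sinh(2πaωτ)/(e^{2πωτ} - 1) dτ. Then |H_K| ≤ √2·(2a)/(2π(K-a)), and consequently H_K → 0 as K → ∞. -/

import Mathlib

open MeasureTheory Filter

noncomputable def omg : ℂ := Complex.exp (-(Real.pi : ℂ) * Complex.I / 4)

/-- `H_K := ∫_0^∞ e^{-2πKωτ}·2e^{-πxτ²} sinh(2πaωτ)/(e^{2πωτ} - 1) dτ`. -/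
noncomputable def Hfun (x a : ℝ) (K : ℕ) : ℂ :=
  ∫ τ in Set.Ioi (0:ℝ),
    Complex.exp (-2 * (Real.pi : ℂ) * (K : ℂ) * omg * (τ : ℂ)) *
      (2 * Complex.exp (-(Real.pi : ℂ) * (x : ℂ) * (τ : ℂ) ^ 2) *
        Complex.sinh (2 * (Real.pi : ℂ) * (a : ℂ) * omg * (τ : ℂ))) /
      (Complex.exp (2 * (Real.pi : ℂ) * omg * (τ : ℂ)) - 1)

/-!
Since `ω = (1 - i)/√2`, the factor `e^{-2πKωτ}` has modulus `e^{-√2πKτ}`. The mean value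
theorem for `exp` on the left half-plane gives `|1 - e^{-w}| ≤ |w|` for `Re w ≥ 0`, hence
`|sinh z| ≤ |z| e^{Re z}` for `Re z ≥ 0`; and `|e^{tω} - 1| ≥ t` for `t ≥ 0`, because
`|e^{tω} - 1|² = (e^u - 1)² + 2e^u(1 - cos u)` with `u = t/√2`. Together with
`|e^{-πxτ²}| ≤ 1` this bounds the integrand by `2a e^{-√2π(K-a)τ}`, whose integral over
`(0, ∞)` is `√2·2a/(2π(K-a))`.
-/

namespace Complex

theorem norm_exp_sub_one_le_of_re_nonpos {z : ℂ} (hz : z.re ≤ 0) : ‖exp z - 1‖ ≤ ‖z‖ := by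
  simpa using (convex_halfSpace_re_le (0 : ℝ)).norm_image_sub_le_of_norm_deriv_le (C := 1)
    (fun _ _ => differentiableAt_exp) (fun w hw => by simpa [norm_exp] using hw)
    (x := 0) (y := z) (by simp) hz

theorem norm_sinh_le_of_re_nonneg {z : ℂ} (hz : 0 ≤ z.re) :
    ‖sinh z‖ ≤ ‖z‖ * Real.exp z.re := by
  have hsinh : sinh z = exp z * (1 - exp (-(2 * z))) / 2 := by
    rw [sinh, mul_sub, mul_one, ← exp_add]; ring_nf
  have hdiff : ‖1 - exp (-(2 * z))‖ ≤ 2 * ‖z‖ := by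
    rw [norm_sub_rev]
    simpa using norm_exp_sub_one_le_of_re_nonpos (z := -(2 * z)) (by simpa using hz)
  rw [hsinh, norm_div, norm_mul, norm_exp, RCLike.norm_ofNat]
  nlinarith [Real.exp_pos z.re]

end Complex

open Real Set

theorem Real.two_mul_sq_le_exp_sub_one_sq_add {u : ℝ} (hu : 0 ≤ u) :
    2 * u ^ 2 ≤ (exp u - 1) ^ 2 + 2 * exp u * (1 - cos u) := by
  have hexp := quadratic_le_exp_of_nonneg hu
  rcases le_or_gt u 1 with h1 | h1
  · have hcos : u ^ 2 / 2 - u ^ 4 * (5 / 96) ≤ 1 - cos u := by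
      have := (abs_le.1 (cos_bound (x := u) (by rwa [abs_of_nonneg hu]))).2
      rw [abs_of_nonneg hu] at this
      linarith
    have h4 : u ^ 4 ≤ u ^ 3 := pow_le_pow_of_le_one hu h1 (by norm_num)
    have h5 : u ^ 5 ≤ u ^ 3 := pow_le_pow_of_le_one hu h1 (by norm_num)
    nlinarith [mul_le_mul_of_nonneg_left hcos (by positivity : (0:ℝ) ≤ 2 * exp u)]
  · -- here `e^u - 1 ≥ u + u²/2 ≥ 3u/2` already suffices
    nlinarith [exp_pos u, cos_le_one u]

theorem omg_eq : omg = ((√2 / 2 : ℝ) : ℂ) * (1 - Complex.I) := by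
  have h : -(π : ℂ) * Complex.I / 4 = ((-(π / 4) : ℝ) : ℂ) * Complex.I := by
    push_cast; ring
  rw [omg, h, Complex.exp_mul_I, ← Complex.ofReal_cos, ← Complex.ofReal_sin,
    cos_neg, sin_neg, cos_pi_div_four, sin_pi_div_four]
  push_cast; ring

theorem omg_re : omg.re = √2 / 2 := by simp [omg_eq]

theorem omg_im : omg.im = -(√2 / 2) := by simp [omg_eq]

theorem norm_omg : ‖omg‖ = 1 := by
  rw [omg, show -(π : ℂ) * Complex.I / 4 = ((-(π / 4) : ℝ) : ℂ) * Complex.I by push_cast; ring]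
  exact Complex.norm_exp_ofReal_mul_I _

theorem le_norm_exp_mul_omg_sub_one {t : ℝ} (ht : 0 ≤ t) :
    t ≤ ‖Complex.exp (t * omg) - 1‖ := by
  set u := t * (√2 / 2) with hu
  have ht2 : t ^ 2 = 2 * u ^ 2 := by
    rw [hu, mul_pow, div_pow, sq_sqrt zero_le_two]; ring
  have hnormSq : Complex.normSq (Complex.exp (t * omg) - 1)
      = (exp u - 1) ^ 2 + 2 * exp u * (1 - cos u) := by
    simp only [Complex.normSq_apply, Complex.sub_re, Complex.sub_im, Complex.exp_re,
      Complex.exp_im, Complex.re_ofReal_mul, Complex.im_ofReal_mul, omg_re, omg_im, Complex.one_re,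
      Complex.one_im, mul_neg, cos_neg, sin_neg, ← hu]
    linear_combination exp u ^ 2 * sin_sq_add_cos_sq u
  rw [Complex.norm_def, hnormSq]
  refine le_sqrt_of_sq_le ?_
  rw [ht2]
  exact two_mul_sq_le_exp_sub_one_sq_add (by positivity)

noncomputable def Hintegrand (x a : ℝ) (K : ℕ) (τ : ℝ) : ℂ :=
  Complex.exp (-2 * (π : ℂ) * (K : ℂ) * omg * (τ : ℂ)) *
      (2 * Complex.exp (-(π : ℂ) * (x : ℂ) * (τ : ℂ) ^ 2) *
        Complex.sinh (2 * (π : ℂ) * (a : ℂ) * omg * (τ : ℂ))) /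
      (Complex.exp (2 * (π : ℂ) * omg * (τ : ℂ)) - 1)

theorem norm_Hintegrand_le {x a : ℝ} (hx : 0 ≤ x) (ha : 0 ≤ a) (K : ℕ) {τ : ℝ} (hτ : 0 < τ) :
    ‖Hintegrand x a K τ‖ ≤ 2 * a * exp (-(√2 * π * (K - a)) * τ) := by
  have hπ := pi_pos
  have hdecay : ‖Complex.exp (-2 * π * K * omg * τ)‖ = exp (-(√2 * π * K * τ)) := by
    rw [Complex.norm_exp]; congr 1; simp [omg_re, -mul_eq_mul_right_iff]; ring
  have hgauss : ‖Complex.exp (-π * x * τ ^ 2)‖ ≤ 1 := by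
    rw [Complex.norm_exp, exp_le_one_iff]
    simpa [← Complex.ofReal_pow] using by positivity
  have hsinh : ‖Complex.sinh (2 * π * a * omg * τ)‖ ≤ 2 * π * a * τ * exp (√2 * π * a * τ) := by
    have hre : (2 * π * a * omg * τ : ℂ).re = √2 * π * a * τ := by
      simp [omg_re, -mul_eq_mul_right_iff]; ring
    have hnorm : ‖(2 * π * a * omg * τ : ℂ)‖ = 2 * π * a * τ := by
      simp [norm_omg, abs_of_nonneg ha, abs_of_pos hτ, abs_of_pos hπ]
    calc _ ≤ _ := Complex.norm_sinh_le_of_re_nonneg (by rw [hre]; positivity)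
      _ = _ := by rw [hre, hnorm]
  have hdenom : 2 * π * τ ≤ ‖Complex.exp (2 * π * omg * τ) - 1‖ := by
    convert le_norm_exp_mul_omg_sub_one (t := 2 * π * τ) (by positivity) using 4
    push_cast; ring
  rw [Hintegrand, norm_div, norm_mul, norm_mul, norm_mul, hdecay, RCLike.norm_ofNat]
  calc _ ≤ exp (-(√2 * π * K * τ)) * (2 * 1 * (2 * π * a * τ * exp (√2 * π * a * τ)))
        / (2 * π * τ) := by gcongr
    _ = 2 * a * (exp (-(√2 * π * K * τ)) * exp (√2 * π * a * τ)) := by field_simp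
    _ = _ := by rw [← exp_add]; ring_nf

theorem norm_Hfun_le {x a : ℝ} (hx : 0 ≤ x) (ha : 0 ≤ a) {K : ℕ} (hK : a < K) :
    ‖Hfun x a K‖ ≤ √2 * (2 * a) / (2 * π * (K - a)) := by
  have hc : 0 < √2 * π * (K - a) := by have := sub_pos.2 hK; positivity
  calc ‖Hfun x a K‖ ≤ ∫ τ in Ioi 0, 2 * a * exp (-(√2 * π * (K - a)) * τ) :=
        norm_integral_le_of_norm_le ((integrableOn_exp_mul_Ioi (neg_lt_zero.2 hc) 0).const_mul _)
          ((ae_restrict_mem measurableSet_Ioi).mono fun τ hτ => norm_Hintegrand_le hx ha K hτ)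
    _ = 2 * a / (√2 * π * (K - a)) := by
        rw [integral_const_mul, integral_exp_mul_Ioi (neg_lt_zero.2 hc), mul_zero, exp_zero]
        field_simp
    _ = √2 * (2 * a) / (2 * π * (K - a)) := by
        field_simp
        rw [sq_sqrt zero_le_two]
        ring

/-- For `0 ≤ a < K`: `|H_K| ≤ √2·2a/(2π(K-a))`, and `H_K → 0` as `K → ∞`. -/
theorem HK_bound_and_limit (x a : ℝ) (hx : 0 < x) (ha : 0 ≤ a) :
    (∀ K : ℕ, 1 ≤ K → a < K →
        ‖Hfun x a K‖ ≤ Real.sqrt 2 * (2 * a) / (2 * Real.pi * ((K : ℝ) - a))) ∧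
    Tendsto (fun K : ℕ => Hfun x a K) atTop (nhds 0) := by
  refine ⟨fun K _ hK => norm_Hfun_le hx.le ha hK, ?_⟩
  have hden : Tendsto (fun K : ℕ => 2 * π * ((K : ℝ) - a)) atTop atTop :=
    (tendsto_atTop_add_const_right _ (-a) tendsto_natCast_atTop_atTop).const_mul_atTop two_pi_pos
  refine squeeze_zero_norm' ?_ ((tendsto_const_nhds (x := √2 * (2 * a))).div_atTop hden)
  filter_upwards [eventually_gt_atTop ⌈a⌉₊] with K hK
  exact norm_Hfun_le hx.le ha (Nat.lt_of_ceil_lt hK)
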